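/- Let w ∈ ℍ and s ∈ ℂ, and define u_s : ℍ \ {w} → ℂ by u_s(z) = sinh(d_hyp(z, w))^{−s}. Then u_s is smooth away from z = w, and for every z = x + iy ∈ ℍ with z ≠ w one has −y² (∂²u_s/∂x² (z) + ∂²u_s/∂y² (z)) − s(1−s) u_s(z) = −s² sinh(d_hyp(z, w))^{−(s+2)}. (In other words, each term of the elliptic Eisenstein series satisfies (Δ_hyp − s(1−s)) sinh(d_hyp(·,w))^{−s} = −s² sinh(d_hyp(·,w))^{−(s+2)}, where Δ_hyp = −y²(∂²/∂x² + ∂²/∂y²) is the hyperbolic Laplacian.) -/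

import Mathlib

/-- `sinh` of the hyperbolic distance between two points of the upper half-plane,
via `cosh d(z,w) = 1 + |z−w|²/(2 Im z Im w)` and `sinh d = √(cosh² d − 1)`. -/
noncomputable def sinhDist (z w : ℂ) : ℝ :=
  Real.sqrt ((1 + ‖z - w‖ ^ 2 / (2 * z.im * w.im)) ^ 2 - 1)

/-- `u_s(z) = sinh(d(z,w))^{−s}`, the summand of the elliptic Eisenstein series. -/
noncomputable def uEll (s : ℂ) (w z : ℂ) : ℂ :=
  ((sinhDist z w : ℝ) : ℂ) ^ (-s)

noncomputable def Sfn (a v x y : ℝ) : ℝ :=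
  (1 + ((x - a) ^ 2 + (y - v) ^ 2) / (2 * y * v)) ^ 2 - 1

noncomputable def S1x (a v x y : ℝ) : ℝ :=
  2 * (1 + ((x - a) ^ 2 + (y - v) ^ 2) / (2 * y * v)) * ((x - a) / (y * v))

noncomputable def S1y (a v x y : ℝ) : ℝ :=
  2 * (1 + ((x - a) ^ 2 + (y - v) ^ 2) / (2 * y * v)) *
    ((y ^ 2 - v ^ 2 - (x - a) ^ 2) / (2 * v * y ^ 2))

noncomputable def S2x (a v x y : ℝ) : ℝ :=
  2 * ((x - a) / (y * v)) ^ 2 +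
    2 * (1 + ((x - a) ^ 2 + (y - v) ^ 2) / (2 * y * v)) * (1 / (y * v))

noncomputable def S2y (a v x y : ℝ) : ℝ :=
  2 * ((y ^ 2 - v ^ 2 - (x - a) ^ 2) / (2 * v * y ^ 2)) ^ 2 +
    2 * (1 + ((x - a) ^ 2 + (y - v) ^ 2) / (2 * y * v)) *
      (((x - a) ^ 2 + v ^ 2) / (v * y ^ 3))

lemma sqrtCpow {t : ℝ} (ht : 0 < t) (c : ℂ) :
    ((Real.sqrt t : ℝ) : ℂ) ^ c = ((t : ℝ) : ℂ) ^ (c / 2) := by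
  have h1 : (0:ℝ) < Real.sqrt t := Real.sqrt_pos.2 ht
  have h1' : ((Real.sqrt t : ℝ) : ℂ) ≠ 0 := by exact_mod_cast h1.ne'
  have ht' : ((t : ℝ) : ℂ) ≠ 0 := by exact_mod_cast ht.ne'
  rw [Complex.cpow_def_of_ne_zero h1', Complex.cpow_def_of_ne_zero ht',
    ← Complex.ofReal_log h1.le, ← Complex.ofReal_log ht.le, Real.log_sqrt ht.le]
  congr 1
  push_cast
  ring

open Complex Filter in
lemma secondDerivCpow (c : ℂ) (p p1 : ℝ → ℝ) {p2 : ℝ} {x : ℝ}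
    (hp : ∀ᶠ t in nhds x, HasDerivAt p (p1 t) t ∧ 0 < p t)
    (hp1 : HasDerivAt p1 p2 x) :
    deriv (deriv (fun t => ((p t : ℝ) : ℂ) ^ c)) x
      = c * (c - 1) * ((p x : ℝ) : ℂ) ^ (c - 2) * ((p1 x : ℝ) : ℂ) ^ 2
        + c * ((p x : ℝ) : ℂ) ^ (c - 1) * ((p2 : ℝ) : ℂ) := by
  have hx := hp.self_of_nhds
  have step1 : ∀ t : ℝ, HasDerivAt p (p1 t) t → 0 < p t →
      HasDerivAt (fun t => ((p t : ℝ) : ℂ) ^ c)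
        (c * ((p t : ℝ) : ℂ) ^ (c - 1) * ((p1 t : ℝ) : ℂ)) t := by
    intro t h1 h2
    have := (Complex.hasStrictDerivAt_cpow_const
      (c := c) (Complex.ofReal_mem_slitPlane.2 h2)).hasDerivAt.scomp t h1.ofReal_comp
    refine this.congr_deriv ?_
    simp [smul_eq_mul]; ring
  have hev : deriv (fun t => ((p t : ℝ) : ℂ) ^ c)
      =ᶠ[nhds x] fun t => c * ((p t : ℝ) : ℂ) ^ (c - 1) * ((p1 t : ℝ) : ℂ) := by
    filter_upwards [hp] with t ht
    exact (step1 t ht.1 ht.2).deriv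
  rw [hev.deriv_eq]
  have h1 : HasDerivAt (fun t => ((p t : ℝ) : ℂ) ^ (c - 1))
      ((c - 1) * ((p x : ℝ) : ℂ) ^ (c - 1 - 1) * ((p1 x : ℝ) : ℂ)) x := by
    have := (Complex.hasStrictDerivAt_cpow_const
      (c := c - 1) (Complex.ofReal_mem_slitPlane.2 hx.2)).hasDerivAt.scomp x hx.1.ofReal_comp
    refine this.congr_deriv ?_
    simp [smul_eq_mul]; ring
  have h2 : HasDerivAt (fun t => ((p1 t : ℝ) : ℂ)) ((p2 : ℝ) : ℂ) x := hp1.ofReal_comp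
  have h3 := ((h1.const_mul c).mul h2).deriv
  rw [show (fun t => c * ((p t : ℝ) : ℂ) ^ (c - 1) * ((p1 t : ℝ) : ℂ)) = (fun y => c * ((p y : ℝ) : ℂ) ^ (c - 1)) * (fun t => ((p1 t : ℝ) : ℂ)) from rfl, h3, show c - 1 - 1 = c - 2 by ring]
  ring

lemma hasDerivAt_Sfn_x (a v y : ℝ) (hy : y ≠ 0) (hv : v ≠ 0) (x : ℝ) :
    HasDerivAt (fun t => Sfn a v t y) (S1x a v x y) x := by
  have h1 : HasDerivAt (fun t : ℝ => (t - a) ^ 2 + (y - v) ^ 2) (2 * (x - a)) x := by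
    simpa using (((hasDerivAt_id x).sub_const a).pow 2).add_const ((y - v) ^ 2)
  have h3 := (((h1.div_const (2 * y * v)).const_add 1).pow 2).sub_const 1
  unfold Sfn S1x
  refine h3.congr_deriv ?_
  simp only [id, Pi.div_apply, Nat.cast_ofNat, show (2:ℕ) - 1 = 1 from rfl, pow_one]
  field_simp

lemma hasDerivAt_S1x (a v y : ℝ) (hy : y ≠ 0) (hv : v ≠ 0) (x : ℝ) :
    HasDerivAt (fun t => S1x a v t y) (S2x a v x y) x := by
  have h1 : HasDerivAt (fun t : ℝ => (t - a) ^ 2 + (y - v) ^ 2) (2 * (x - a)) x := by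
    simpa using (((hasDerivAt_id x).sub_const a).pow 2).add_const ((y - v) ^ 2)
  have hu := ((h1.div_const (2 * y * v)).const_add 1).const_mul 2
  have hw := ((hasDerivAt_id x).sub_const a).div_const (y * v)
  have h3 := hu.mul hw
  unfold S1x S2x
  refine h3.congr_deriv ?_
  simp only [id, Pi.div_apply, Nat.cast_ofNat]
  field_simp

lemma hasDerivAt_Sfn_y (a v x : ℝ) (hv : v ≠ 0) (y : ℝ) (hy : y ≠ 0) :
    HasDerivAt (fun t => Sfn a v x t) (S1y a v x y) y := by
  have hnum : HasDerivAt (fun t : ℝ => (x - a) ^ 2 + (t - v) ^ 2) (2 * (y - v)) y := by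
    simpa using ((((hasDerivAt_id y).sub_const v).pow 2).const_add ((x - a) ^ 2))
  have hden : HasDerivAt (fun t : ℝ => 2 * t * v) (2 * v) y := by
    simpa using ((hasDerivAt_id y).const_mul 2).mul_const v
  have hd0 : 2 * y * v ≠ 0 := by
    simp [hy, hv]
  have h3 := (((hnum.div hden hd0).const_add 1).pow 2).sub_const 1
  unfold Sfn S1y
  refine h3.congr_deriv ?_
  simp only [id, Pi.div_apply, Nat.cast_ofNat, show (2:ℕ) - 1 = 1 from rfl, pow_one]
  field_simp
  ring

lemma hasDerivAt_S1y (a v x : ℝ) (hv : v ≠ 0) (y : ℝ) (hy : y ≠ 0) :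
    HasDerivAt (fun t => S1y a v x t) (S2y a v x y) y := by
  have hnum : HasDerivAt (fun t : ℝ => (x - a) ^ 2 + (t - v) ^ 2) (2 * (y - v)) y := by
    simpa using ((((hasDerivAt_id y).sub_const v).pow 2).const_add ((x - a) ^ 2))
  have hden : HasDerivAt (fun t : ℝ => 2 * t * v) (2 * v) y := by
    simpa using ((hasDerivAt_id y).const_mul 2).mul_const v
  have hd0 : 2 * y * v ≠ 0 := by simp [hy, hv]
  have hu := ((hnum.div hden hd0).const_add 1).const_mul 2
  have hnum2 : HasDerivAt (fun t : ℝ => t ^ 2 - v ^ 2 - (x - a) ^ 2) (2 * y) y := by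
    simpa using ((hasDerivAt_pow 2 y).sub_const (v ^ 2)).sub_const ((x - a) ^ 2)
  have hden2 : HasDerivAt (fun t : ℝ => 2 * v * t ^ 2) (2 * v * (2 * y)) y := by
    simpa [mul_comm, mul_assoc, mul_left_comm] using (hasDerivAt_pow 2 y).const_mul (2 * v)
  have hd20 : 2 * v * y ^ 2 ≠ 0 := by simp [hy, hv]
  have hR := hnum2.div hden2 hd20
  have h3 := hu.mul hR
  unfold S1y S2y
  refine h3.congr_deriv ?_
  simp only [id, Pi.div_apply, Nat.cast_ofNat]
  field_simp
  ring

lemma idA (a v x y : ℝ) (hy : y ≠ 0) (hv : v ≠ 0) :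
    S1x a v x y ^ 2 + S1y a v x y ^ 2 = 4 * (Sfn a v x y + 1) * Sfn a v x y / y ^ 2 := by
  unfold S1x S1y Sfn
  field_simp
  ring

lemma idB (a v x y : ℝ) (hy : y ≠ 0) (hv : v ≠ 0) :
    S2x a v x y + S2y a v x y = (6 * Sfn a v x y + 4) / y ^ 2 := by
  unfold S2x S2y Sfn
  field_simp
  ring

lemma Sfn_pos {a v x y : ℝ} (hy : 0 < y) (hv : 0 < v)
    (hr : 0 < (x - a) ^ 2 + (y - v) ^ 2) : 0 < Sfn a v x y := by
  have hQ : 0 < ((x - a) ^ 2 + (y - v) ^ 2) / (2 * y * v) :=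
    div_pos hr (by positivity)
  unfold Sfn
  nlinarith

lemma uEll_eq (s : ℂ) (w : ℂ) (x y : ℝ) (hy : 0 < y)
    (hpos : 0 < Sfn w.re w.im x y) :
    uEll s w ((x : ℂ) + (y : ℂ) * Complex.I)
      = ((Sfn w.re w.im x y : ℝ) : ℂ) ^ (-s / 2) := by
  have h1 : sinhDist ((x : ℂ) + (y : ℂ) * Complex.I) w = Real.sqrt (Sfn w.re w.im x y) := by
    have him : ((x : ℂ) + (y : ℂ) * Complex.I).im = y := by simp
    have habs : ‖(x : ℂ) + (y : ℂ) * Complex.I - w‖ ^ 2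
        = (x - w.re) ^ 2 + (y - w.im) ^ 2 := by
      rw [Complex.sq_norm, Complex.normSq_apply]
      simp
      ring
    unfold sinhDist Sfn
    rw [him, habs]
  rw [uEll, h1, sqrtCpow hpos (-s), neg_div]

set_option maxHeartbeats 1000000 in
/-- for `w` in the upper half-plane, `u_s(z) = sinh(d_hyp(z,w))^{−s}` is
smooth on the upper half-plane away from `w` and satisfies
`(Δ_hyp − s(1−s)) u_s = −s² sinh(d_hyp(·,w))^{−(s+2)}`,
where `Δ_hyp = −y²(∂²/∂x² + ∂²/∂y²)`. -/
theorem statement17 (s : ℂ) (w : ℂ) (hw : 0 < w.im) :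
    ContDiffOn ℝ (⊤ : ℕ∞) (uEll s w) ({z : ℂ | 0 < z.im} \ {w}) ∧
    ∀ x y : ℝ, 0 < y → (x : ℂ) + (y : ℂ) * Complex.I ≠ w →
      -(y : ℂ) ^ 2 *
          (deriv (deriv (fun x' : ℝ => uEll s w ((x' : ℂ) + (y : ℂ) * Complex.I))) x +
            deriv (deriv (fun y' : ℝ => uEll s w ((x : ℂ) + (y' : ℂ) * Complex.I))) y) -
        s * (1 - s) * uEll s w ((x : ℂ) + (y : ℂ) * Complex.I)
      = -s ^ 2 * uEll (s + 2) w ((x : ℂ) + (y : ℂ) * Complex.I) := by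

  constructor
  · -- smoothness
    intro z hz
    obtain ⟨hz1, hz2⟩ := hz
    have hz1' : (0:ℝ) < z.im := hz1
    have hzw : z ≠ w := hz2
    apply ContDiffAt.contDiffWithinAt
    set h : ℂ → ℝ := fun z =>
      (1 + ((z - w).re * (z - w).re + (z - w).im * (z - w).im) / (2 * z.im * w.im)) ^ 2 - 1
      with hdef
    have hfun : uEll s w = fun z => ((Real.sqrt (h z) : ℝ) : ℂ) ^ (-s) := by
      funext z
      rw [uEll, sinhDist, hdef]
      congr 3
      rw [Complex.sq_norm, Complex.normSq_apply]
    have hrpos : 0 < (z - w).re * (z - w).re + (z - w).im * (z - w).im := by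
      have : z - w ≠ 0 := sub_ne_zero.2 hzw
      have := Complex.normSq_pos.2 this
      rwa [Complex.normSq_apply] at this
    have hpos : 0 < h z := by
      have hQ : 0 < ((z - w).re * (z - w).re + (z - w).im * (z - w).im) / (2 * z.im * w.im) :=
        div_pos hrpos (by positivity)
      rw [hdef]
      simp only
      nlinarith
    have hh : ContDiffAt ℝ (⊤ : ℕ∞) h z := by
      have c1 : ContDiff ℝ (⊤ : ℕ∞) (fun z : ℂ => (z - w).re * (z - w).re + (z - w).im * (z - w).im) := by
        apply ContDiff.add <;> apply ContDiff.mul <;>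
          first
            | exact Complex.reCLM.contDiff.comp (contDiff_id.sub contDiff_const)
            | exact Complex.imCLM.contDiff.comp (contDiff_id.sub contDiff_const)
      have c2 : ContDiff ℝ (⊤ : ℕ∞) (fun z : ℂ => 2 * z.im * w.im) :=
        (contDiff_const.mul Complex.imCLM.contDiff).mul contDiff_const
      have hden : 2 * z.im * w.im ≠ 0 := by positivity
      exact (((contDiffAt_const (c := (1:ℝ))).add (c1.contDiffAt.div c2.contDiffAt hden)).pow 2).sub contDiffAt_const
    have h2 : ContDiffAt ℝ (⊤ : ℕ∞) (fun z => ((Real.sqrt (h z) : ℝ) : ℂ)) z :=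
      Complex.ofRealCLM.contDiff.contDiffAt.comp z (hh.sqrt hpos.ne')
    have h3 : ContDiffAt ℝ (⊤ : ℕ∞) (fun t : ℂ => t ^ (-s)) ((Real.sqrt (h z) : ℝ) : ℂ) := by
      have ha : AnalyticAt ℂ (fun t : ℂ => t ^ (-s)) ((Real.sqrt (h z) : ℝ) : ℂ) := by
        apply AnalyticAt.cpow analyticAt_id analyticAt_const
        exact Complex.ofReal_mem_slitPlane.2 (Real.sqrt_pos.2 hpos)
      exact ha.contDiffAt.restrict_scalars ℝ
    rw [hfun]
    exact h3.comp z h2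
  · intro x y hy hne
    set a := w.re with ha
    set v := w.im with hv0
    have hv : 0 < v := hw
    have hr2 : 0 < (x - a) ^ 2 + (y - v) ^ 2 := by
      rcases eq_or_ne x a with hxa | hxa
      · rcases eq_or_ne y v with hyv | hyv
        · exact absurd (Complex.ext (by simp [hxa, ha]) (by simp [hyv, hv0])) hne
        · have h1 : y - v ≠ 0 := sub_ne_zero.2 hyv
          positivity
      · have h1 : x - a ≠ 0 := sub_ne_zero.2 hxa
        positivity
    have hpos : 0 < Sfn a v x y := Sfn_pos hy hv hr2
    have hSne : ((Sfn a v x y : ℝ) : ℂ) ≠ 0 := by exact_mod_cast hpos.ne'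
    have hY : ((y : ℝ) : ℂ) ≠ 0 := by exact_mod_cast hy.ne'
    -- x-direction
    have hcx : ContinuousAt (fun t => Sfn a v t y) x :=
      (hasDerivAt_Sfn_x a v y hy.ne' hv.ne' x).continuousAt
    have hposx : ∀ᶠ t in nhds x, 0 < Sfn a v t y := by
      have := hcx.preimage_mem_nhds (Ioi_mem_nhds hpos)
      filter_upwards [this] with t ht using ht
    have hevx : ∀ᶠ t in nhds x,
        HasDerivAt (fun t' => Sfn a v t' y) (S1x a v t y) t ∧ 0 < Sfn a v t y := by
      filter_upwards [hposx] with t ht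
      exact ⟨hasDerivAt_Sfn_x a v y hy.ne' hv.ne' t, ht⟩
    have heqx : (fun x' : ℝ => uEll s w ((x' : ℂ) + (y : ℂ) * Complex.I))
        =ᶠ[nhds x] fun t => ((Sfn a v t y : ℝ) : ℂ) ^ (-s / 2) := by
      filter_upwards [hposx] with t ht
      exact uEll_eq s w t y hy ht
    have hdx : deriv (deriv (fun x' : ℝ => uEll s w ((x' : ℂ) + (y : ℂ) * Complex.I))) x
        = (-s / 2) * (-s / 2 - 1) * ((Sfn a v x y : ℝ) : ℂ) ^ (-s / 2 - 2) *
            ((S1x a v x y : ℝ) : ℂ) ^ 2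
          + (-s / 2) * ((Sfn a v x y : ℝ) : ℂ) ^ (-s / 2 - 1) * ((S2x a v x y : ℝ) : ℂ) := by
      rw [Filter.EventuallyEq.deriv_eq heqx.deriv]
      exact secondDerivCpow (-s / 2) (fun t => Sfn a v t y) (fun t => S1x a v t y) hevx (hasDerivAt_S1x a v y hy.ne' hv.ne' x)
    -- y-direction
    have hcy : ContinuousAt (fun t => Sfn a v x t) y :=
      (hasDerivAt_Sfn_y a v x hv.ne' y hy.ne').continuousAt
    have hposy : ∀ᶠ t in nhds y, 0 < Sfn a v x t := by
      have := hcy.preimage_mem_nhds (Ioi_mem_nhds hpos)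
      filter_upwards [this] with t ht using ht
    have hposy2 : ∀ᶠ t in nhds y, 0 < t := eventually_gt_nhds hy
    have hevy : ∀ᶠ t in nhds y,
        HasDerivAt (fun t' => Sfn a v x t') (S1y a v x t) t ∧ 0 < Sfn a v x t := by
      filter_upwards [hposy, hposy2] with t ht1 ht2
      exact ⟨hasDerivAt_Sfn_y a v x hv.ne' t ht2.ne', ht1⟩
    have heqy : (fun y' : ℝ => uEll s w ((x : ℂ) + (y' : ℂ) * Complex.I))
        =ᶠ[nhds y] fun t => ((Sfn a v x t : ℝ) : ℂ) ^ (-s / 2) := by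
      filter_upwards [hposy, hposy2] with t ht1 ht2
      exact uEll_eq s w x t ht2 ht1
    have hdy : deriv (deriv (fun y' : ℝ => uEll s w ((x : ℂ) + (y' : ℂ) * Complex.I))) y
        = (-s / 2) * (-s / 2 - 1) * ((Sfn a v x y : ℝ) : ℂ) ^ (-s / 2 - 2) *
            ((S1y a v x y : ℝ) : ℂ) ^ 2
          + (-s / 2) * ((Sfn a v x y : ℝ) : ℂ) ^ (-s / 2 - 1) * ((S2y a v x y : ℝ) : ℂ) := by
      rw [Filter.EventuallyEq.deriv_eq heqy.deriv]
      exact secondDerivCpow (-s / 2) (fun t => Sfn a v x t) (fun t => S1y a v x t) hevy (hasDerivAt_S1y a v x hv.ne' y hy.ne')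
    rw [hdx, hdy, uEll_eq s w x y hy hpos, uEll_eq (s + 2) w x y hy hpos]
    -- cpow algebra
    set G : ℂ := ((Sfn a v x y : ℝ) : ℂ) with hG
    have f1 : G ^ (-s / 2 - 1) = G ^ (-s / 2 - 2) * G := by
      rw [show -s / 2 - 1 = -s / 2 - 2 + 1 by ring, Complex.cpow_add _ _ hSne,
        Complex.cpow_one]
    have f2 : G ^ (-s / 2) = G ^ (-s / 2 - 2) * G ^ 2 := by
      rw [show -s / 2 = -s / 2 - 2 + 2 by ring, Complex.cpow_add _ _ hSne, Complex.cpow_two]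
      norm_num
    have f3 : G ^ (-(s + 2) / 2) = G ^ (-s / 2 - 2) * G := by
      rw [show -(s + 2) / 2 = -s / 2 - 2 + 1 by ring, Complex.cpow_add _ _ hSne,
        Complex.cpow_one]
    rw [f1, f2, f3]
    set H : ℂ := G ^ (-s / 2 - 2) with hH
    -- real identities, cast to ℂ
    have hA0 := idA a v x y hy.ne' hv.ne'
    have hB0 := idB a v x y hy.ne' hv.ne'
    have hA : ((S1x a v x y : ℝ) : ℂ) ^ 2
        = 4 * (G + 1) * G / ((y : ℝ) : ℂ) ^ 2 - ((S1y a v x y : ℝ) : ℂ) ^ 2 := by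
      have h := congrArg (fun r : ℝ => (r : ℂ)) hA0
      push_cast at h
      rw [hG]
      push_cast
      linear_combination h
    have hB : ((S2x a v x y : ℝ) : ℂ)
        = (6 * G + 4) / ((y : ℝ) : ℂ) ^ 2 - ((S2y a v x y : ℝ) : ℂ) := by
      have h := congrArg (fun r : ℝ => (r : ℂ)) hB0
      push_cast at h
      rw [hG]
      push_cast
      linear_combination h
    rw [hA, hB]
    field_simp [hY]
    ring
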